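/- Let X and B be finite sets with |B| = n, let c : X × B → ℝ≥0 be an edge cost function, and let μ̂ : X → ℝ≥0 and ν : B → ℝ≥0 be demands with Σ_{r∈X} μ̂(r) = Σ_{b∈B} ν(b). Suppose there exists a transport plan σ' from μ̂ to ν such that c(r,b) ≤ 4 whenever σ'(r,b) > 0. Then every minimum-cost transport plan σ* from μ̂ to ν satisfies: σ*(r,b) > 0 implies c(r,b) ≤ 4n, for all (r,b) ∈ X × B. -/

import Mathlib

/-- A discrete transport plan from the demands `μ : X → ℝ≥0` to `ν : B → ℝ≥0`: a nonnegative
function on `X × B` with row marginals `μ` and column marginals `ν`. -/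
def IsDiscretePlan {X B : Type*} [Fintype X] [Fintype B]
    (μ : X → ℝ) (ν : B → ℝ) (σ : X → B → ℝ) : Prop :=
  (∀ r b, 0 ≤ σ r b) ∧ (∀ r : X, ∑ b : B, σ r b = μ r) ∧ (∀ b : B, ∑ r : X, σ r b = ν b)

/-!
Fix an edge `(r₀, b₀)` used by the optimal plan `σ*`. Alternating between `σ*`-edges and
`σ'`-edges, walk backwards from `b₀` through the set `S` of nodes of `B` that can reach `b₀`, and
let `R` be the sources that `σ'` connects to `S`. Every `σ*`-edge leaving `R` stays in `S`, so
`σ*` spends all of `μ(R) ≥ ν(S)` on `R × S`; hence `σ*` ships nothing into `S` from outside `R`,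
and `r₀ ∈ R`. A shortest such walk repeats no node of `B`, and together with `(r₀, b₀)` it closes
into a cycle with at most `n` edges of each kind. Optimality of `σ*` means that rerouting a little
mass along the cycle does not help, so the `σ*`-edges of the cycle cost at most its `σ'`-edges,
hence at most `4n`, and `c ≥ 0` bounds `c r₀ b₀` by the former.
-/

open Finset

section Walks

variable {α : Type*}

def IsWalk (s : α → α → Prop) (p : ℕ → α) (k : ℕ) : Prop :=
  ∀ t < k, s (p t) (p (t + 1))

lemma exists_isWalk_of_reflTransGen {s : α → α → Prop} {a b : α}
    (h : Relation.ReflTransGen s a b) : ∃ k, ∃ p : ℕ → α, p 0 = a ∧ p k = b ∧ IsWalk s p k := by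
  induction h with
  | refl => exact ⟨0, fun _ => a, rfl, rfl, fun _ ht => absurd ht (Nat.not_lt_zero _)⟩
  | @tail b c _ hbc ih =>
    obtain ⟨k, p, h0, hk, hp⟩ := ih
    refine ⟨k + 1, fun t => if t ≤ k then p t else c, by simp [h0], by simp, fun t ht => ?_⟩
    rcases Nat.lt_or_ge t k with htk | htk
    · simpa [htk.le, Nat.succ_le_of_lt htk] using hp t htk
    · obtain rfl : t = k := by omega
      simpa [hk] using hbc

lemma IsWalk.exists_shortcut {s : α → α → Prop} {p : ℕ → α} {k i j : ℕ} (hp : IsWalk s p k)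
    (hij : i < j) (hjk : j ≤ k) (heq : p i = p j) :
    ∃ q : ℕ → α, q 0 = p 0 ∧ q (k - (j - i)) = p k ∧ IsWalk s q (k - (j - i)) := by
  refine ⟨fun t => if t ≤ i then p t else p (t + (j - i)), by simp, ?_, fun t ht => ?_⟩
  · rcases eq_or_lt_of_le (show i ≤ k - (j - i) by omega) with hi | hi
    · obtain rfl : k = j := by omega
      simp [show k - (k - i) = i by omega, heq]
    · simp [hi.not_ge, show k - (j - i) + (j - i) = k by omega]
  rcases lt_trichotomy t i with hti | rfl | hti
  · simpa [hti.le, Nat.succ_le_of_lt hti] using hp t (by omega)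
  · have : t + 1 + (j - t) = j + 1 := by omega
    simpa [this, heq] using hp j (by omega)
  · have : t + 1 + (j - i) = t + (j - i) + 1 := by omega
    simpa [hti.not_ge, (hti.trans (Nat.lt_succ_self t)).not_ge, this]
      using hp (t + (j - i)) (by omega)

lemma exists_isWalk_lt_card [Fintype α] {s : α → α → Prop} {a b : α}
    (h : Relation.ReflTransGen s a b) :
    ∃ k < Fintype.card α, ∃ p : ℕ → α, p 0 = a ∧ p k = b ∧ IsWalk s p k := by
  classical
  have hex := exists_isWalk_of_reflTransGen h
  obtain ⟨p, h0, hk, hp⟩ := Nat.find_spec hex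
  set k := Nat.find hex
  have hne : ∀ i j, i < j → j ≤ k → p i ≠ p j := fun i j hij hjk heq => by
    obtain ⟨q, hq0, hqk, hq⟩ := hp.exists_shortcut hij hjk heq
    exact Nat.find_min hex (show k - (j - i) < k by omega) ⟨q, hq0.trans h0, hqk.trans hk, hq⟩
  have hinj : Set.InjOn p (range (k + 1)) := by
    intro i hi j hj heq
    simp only [coe_range, Set.mem_Iio] at hi hj
    rcases lt_trichotomy i j with hij | hij | hij
    · exact absurd heq (hne i j hij (by omega))
    · exact hij
    · exact absurd heq.symm (hne j i hij (by omega))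
  refine ⟨k, ?_, p, h0, hk, hp⟩
  simpa using card_le_card_of_injOn p (fun _ _ => mem_univ _) hinj

end Walks

section Plans

variable {X B : Type*}

def planCost [Fintype X] [Fintype B] (c : X → B → ℝ) (σ : X → B → ℝ) : ℝ :=
  ∑ r, ∑ b, σ r b * c r b

def IsMinCostPlan [Fintype X] [Fintype B] (c : X → B → ℝ) (μ : X → ℝ) (ν : B → ℝ)
    (σ : X → B → ℝ) : Prop :=
  IsDiscretePlan μ ν σ ∧ ∀ τ, IsDiscretePlan μ ν τ → planCost c σ ≤ planCost c τ

section PairCount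

variable {ι : Type*} [Fintype ι] [DecidableEq X] [DecidableEq B]

def pairCount (r : ι → X) (b : ι → B) (x : X) (y : B) : ℝ :=
  ∑ i, if r i = x ∧ b i = y then 1 else 0

lemma sum_pairCount_right [Fintype B] (r : ι → X) (b : ι → B) (x : X) :
    ∑ y, pairCount r b x y = ∑ i, if r i = x then 1 else 0 := by
  unfold pairCount
  rw [sum_comm]
  simp [ite_and]

lemma sum_pairCount_left [Fintype X] (r : ι → X) (b : ι → B) (y : B) :
    ∑ x, pairCount r b x y = ∑ i, if b i = y then 1 else 0 := by
  unfold pairCount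
  rw [sum_comm]
  simp [ite_and]

lemma sum_pairCount_mul [Fintype X] [Fintype B] (r : ι → X) (b : ι → B) (c : X → B → ℝ) :
    ∑ x, ∑ y, pairCount r b x y * c x y = ∑ i, c (r i) (b i) := by
  simp only [pairCount, sum_mul, ite_mul, one_mul, zero_mul]
  simp_rw [sum_comm (s := univ (α := B)), sum_comm (s := univ (α := X))]
  simp [ite_and]

lemma mul_pairCount_le {σ : X → B → ℝ} (hσ : ∀ x y, 0 ≤ σ x y) {r : ι → X} {b : ι → B} {ε : ℝ}
    (hε : 0 ≤ ε) (hle : ∀ i, ε * Fintype.card ι ≤ σ (r i) (b i)) (x : X) (y : B) :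
    ε * pairCount r b x y ≤ σ x y := by
  by_cases hxy : ∃ i, r i = x ∧ b i = y
  · obtain ⟨i, rfl, rfl⟩ := hxy
    refine le_trans (mul_le_mul_of_nonneg_left ?_ hε) (hle i)
    calc pairCount r b (r i) (b i) ≤ ∑ _i : ι, (1 : ℝ) :=
          sum_le_sum fun j _ => by split_ifs <;> norm_num
      _ = Fintype.card ι := by simp
  · rw [pairCount, sum_eq_zero fun i _ => if_neg fun h => hxy ⟨i, h⟩, mul_zero]
    exact hσ x y

end PairCount

variable [Fintype X] [Fintype B] {μ : X → ℝ} {ν : B → ℝ}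

/-- Moving `ε` of mass from each edge `(r i, b i)` to `(r i, b (π i))` keeps the marginals, and
for small `ε > 0` yields a plan, which cannot be cheaper. -/
theorem IsMinCostPlan.sum_le_sum_comp_perm {c : X → B → ℝ} {σ : X → B → ℝ}
    (hσ : IsMinCostPlan c μ ν σ) {ι : Type*} [Fintype ι] [Nonempty ι]
    (r : ι → X) (b : ι → B) (π : Equiv.Perm ι) (hpos : ∀ i, 0 < σ (r i) (b i)) :
    ∑ i, c (r i) (b i) ≤ ∑ i, c (r i) (b (π i)) := by
  classical
  obtain ⟨⟨hnn, hrow, hcol⟩, hmin⟩ := hσ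
  obtain ⟨i₀, -, hi₀⟩ := exists_min_image univ (fun i => σ (r i) (b i)) univ_nonempty
  have hcard : (0 : ℝ) < Fintype.card ι := by exact_mod_cast Fintype.card_pos
  set ε := σ (r i₀) (b i₀) / Fintype.card ι
  have hε : 0 < ε := div_pos (hpos i₀) hcard
  have hεle : ∀ i, ε * Fintype.card ι ≤ σ (r i) (b i) := fun i => by
    rw [div_mul_cancel₀ _ hcard.ne']
    exact hi₀ i (mem_univ i)
  set τ : X → B → ℝ := fun x y => σ x y + ε * (pairCount r (b ∘ π) x y - pairCount r b x y)
  have hτ : IsDiscretePlan μ ν τ := by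
    refine ⟨fun x y => ?_, fun x => ?_, fun y => ?_⟩
    · have hA : 0 ≤ ε * pairCount r (b ∘ π) x y :=
        mul_nonneg hε.le (sum_nonneg fun i _ => by split_ifs <;> norm_num)
      have hC := mul_pairCount_le hnn hε.le hεle x y
      simp only [τ, mul_sub]
      linarith
    · simp only [τ, sum_add_distrib, ← mul_sum, sum_sub_distrib, sum_pairCount_right, sub_self,
        mul_zero, add_zero, hrow]
    · simp only [τ, sum_add_distrib, ← mul_sum, sum_sub_distrib, sum_pairCount_left,
        Function.comp_apply, Equiv.sum_comp π fun i => if b i = y then (1 : ℝ) else 0, sub_self,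
        mul_zero, add_zero, hcol]
  have hcost : planCost c τ =
      planCost c σ + ε * (∑ i, c (r i) (b (π i)) - ∑ i, c (r i) (b i)) := by
    simp only [planCost, τ, add_mul, sum_add_distrib, mul_assoc, ← mul_sum, sub_mul,
      sum_sub_distrib, sum_pairCount_mul]
    rfl
  have := hmin τ hτ
  rw [hcost] at this
  exact sub_nonneg.mp ((mul_nonneg_iff_of_pos_left hε).mp (by linarith))

lemma IsDiscretePlan.sum_sum_mem_eq {p : X → B → ℝ} (hp : IsDiscretePlan μ ν p) (S : Finset B) :
    ∑ x, ∑ y ∈ S, p x y = ∑ y ∈ S, ν y := by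
  rw [sum_comm]
  exact sum_congr rfl fun y _ => hp.2.2 y

/-- `q` already spends `μ(R) ≥ ν(S)` on `R × S`, leaving nothing for `Rᶜ × S`. -/
lemma IsDiscretePlan.eq_zero_of_closed {p q : X → B → ℝ} (hp : IsDiscretePlan μ ν p)
    (hq : IsDiscretePlan μ ν q) {R : Finset X} {S : Finset B}
    (hpR : ∀ x ∉ R, ∀ y ∈ S, p x y = 0) (hqR : ∀ x ∈ R, ∀ y ∉ S, q x y = 0) :
    ∀ x ∉ R, ∀ y ∈ S, q x y = 0 := by
  classical
  have hp_in : ∑ x ∈ R, ∑ y ∈ S, p x y = ∑ y ∈ S, ν y := by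
    rw [← hp.sum_sum_mem_eq, ← sum_add_sum_compl R, sum_eq_zero (s := Rᶜ), add_zero]
    exact fun x hx => sum_eq_zero fun y hy => hpR x (mem_compl.mp hx) y hy
  have hq_row : ∀ x ∈ R, ∑ y ∈ S, q x y = μ x := fun x hx => by
    rw [← hq.2.1 x, ← sum_add_sum_compl S, sum_eq_zero (s := Sᶜ), add_zero]
    exact fun y hy => hqR x hx y (mem_compl.mp hy)
  have hout : ∑ x ∈ Rᶜ, ∑ y ∈ S, q x y ≤ 0 :=
    calc ∑ x ∈ Rᶜ, ∑ y ∈ S, q x y = ∑ x ∈ R, ∑ y ∈ S, p x y - ∑ x ∈ R, μ x := by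
          rw [hp_in, ← hq.sum_sum_mem_eq, ← sum_add_sum_compl R, sum_congr rfl hq_row]
          ring
      _ ≤ 0 := sub_nonpos.mpr <| sum_le_sum fun x _ => by
          rw [← hp.2.1 x]
          exact sum_le_sum_of_subset_of_nonneg (subset_univ S) fun y _ _ => hp.1 x y
  have hzero := (sum_eq_zero_iff_of_nonneg fun x _ => sum_nonneg fun y _ => hq.1 x y).mp
    (le_antisymm hout (sum_nonneg fun x _ => sum_nonneg fun y _ => hq.1 x y))
  intro x hx y hy
  exact (sum_eq_zero_iff_of_nonneg fun y _ => hq.1 x y).mp (hzero x (mem_compl.mpr hx)) y hy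

def AltStep (σ τ : X → B → ℝ) (b b' : B) : Prop :=
  ∃ x, 0 < σ x b ∧ 0 < τ x b'

lemma IsDiscretePlan.exists_reflTransGen_altStep {σ τ : X → B → ℝ} (hσ : IsDiscretePlan μ ν σ)
    (hτ : IsDiscretePlan μ ν τ) {x : X} {b : B} (hxb : 0 < σ x b) :
    ∃ b', 0 < τ x b' ∧ Relation.ReflTransGen (AltStep σ τ) b' b := by
  classical
  set S : Finset B := {y | Relation.ReflTransGen (AltStep σ τ) y b}
  set R : Finset X := {x | ∃ y ∈ S, 0 < τ x y}
  have hτR : ∀ x ∉ R, ∀ y ∈ S, τ x y = 0 := fun x hx y hy =>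
    le_antisymm (not_lt.mp fun h => hx (mem_filter.mpr ⟨mem_univ x, y, hy, h⟩)) (hτ.1 x y)
  have hσR : ∀ x ∈ R, ∀ y ∉ S, σ x y = 0 := by
    intro x hx y hy
    obtain ⟨y', hy', hxy'⟩ : ∃ y' ∈ S, 0 < τ x y' := by simpa [R] using hx
    refine le_antisymm (not_lt.mp fun h => hy ?_) (hσ.1 x y)
    simp only [S, mem_filter, mem_univ, true_and] at hy' ⊢
    exact Relation.ReflTransGen.head ⟨x, h, hxy'⟩ hy'
  have hbS : b ∈ S := mem_filter.mpr ⟨mem_univ b, Relation.ReflTransGen.refl⟩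
  have hxR : x ∈ R := by
    by_contra hx
    exact hxb.ne' (hτ.eq_zero_of_closed hσ hτR hσR x hx b hbS)
  simpa [R, S, and_comm] using hxR

end Plans

theorem min_cost_plan_small_cost_edges_general {X B : Type*} [Fintype X] [Fintype B]
    (c : X → B → ℝ) (hc : ∀ r b, 0 ≤ c r b)
    (μ : X → ℝ) (ν : B → ℝ)
    (σ' : X → B → ℝ) (hσ' : IsDiscretePlan μ ν σ')
    (hσ'c : ∀ r b, 0 < σ' r b → c r b ≤ 4)
    (σstar : X → B → ℝ) (hstar : IsDiscretePlan μ ν σstar)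
    (hmin : ∀ σ : X → B → ℝ, IsDiscretePlan μ ν σ →
      ∑ r : X, ∑ b : B, σstar r b * c r b ≤ ∑ r : X, ∑ b : B, σ r b * c r b) :
    ∀ r b, 0 < σstar r b → c r b ≤ 4 * (Fintype.card B : ℝ) := by
  intro r₀ b₀ hpos
  obtain ⟨b₁, hb₁, hreach⟩ := hstar.exists_reflTransGen_altStep hσ' hpos
  obtain ⟨k, hk, p, hp0, hpk, hwalk⟩ := exists_isWalk_lt_card hreach
  choose x hxσ hxσ' using hwalk
  -- The cycle: `σstar`-edges `(r i, b i)` and `σ'`-edges `(r i, b (i + 1))`, with `b 0 = b₁`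
  -- and `(r₀, b₀)` as the last `σstar`-edge.
  let r : Fin (k + 1) → X := Fin.lastCases r₀ fun t => x t t.isLt
  let b : Fin (k + 1) → B := fun i => p i
  have hσ_pos : ∀ i, 0 < σstar (r i) (b i) := Fin.lastCases
    (by simpa [r, b, hpk] using hpos) fun t => by simpa [r, b] using hxσ t t.isLt
  have hσ'_pos : ∀ i, 0 < σ' (r i) (b (finRotate _ i)) := Fin.lastCases
    (by simpa [r, b, finRotate_last, hp0] using hb₁)
    fun t => by simpa [r, b, finRotate_of_lt t.isLt] using hxσ' t t.isLt
  calc c r₀ b₀ = c (r (Fin.last k)) (b (Fin.last k)) := by simp [r, b, hpk]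
    _ ≤ ∑ i, c (r i) (b i) := single_le_sum (fun i _ => hc _ _) (mem_univ _)
    _ ≤ ∑ i, c (r i) (b (finRotate _ i)) :=
      IsMinCostPlan.sum_le_sum_comp_perm ⟨hstar, hmin⟩ r b _ hσ_pos
    _ ≤ ∑ _i : Fin (k + 1), (4 : ℝ) := sum_le_sum fun i _ => hσ'c _ _ (hσ'_pos i)
    _ ≤ 4 * Fintype.card B := by
      rw [sum_const, card_univ, Fintype.card_fin, nsmul_eq_mul, mul_comm]
      gcongr
      exact_mod_cast hk

/-- If there exists a transport plan from `μ̂` to `ν` that only uses edges of cost at most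
`4`, then every minimum-cost transport plan only uses edges of cost at most `4n`, where
`n = |B|`. -/
theorem min_cost_plan_small_cost_edges {X B : Type*} [Fintype X] [Fintype B]
    (c : X → B → ℝ) (hc : ∀ r b, 0 ≤ c r b)
    (μ : X → ℝ) (ν : B → ℝ) (hμ : ∀ r, 0 ≤ μ r) (hν : ∀ b, 0 ≤ ν b)
    (hbal : ∑ r : X, μ r = ∑ b : B, ν b)
    (σ' : X → B → ℝ) (hσ' : IsDiscretePlan μ ν σ')
    (hσ'c : ∀ r b, 0 < σ' r b → c r b ≤ 4)
    (σstar : X → B → ℝ) (hstar : IsDiscretePlan μ ν σstar)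
    (hmin : ∀ σ : X → B → ℝ, IsDiscretePlan μ ν σ →
      ∑ r : X, ∑ b : B, σstar r b * c r b ≤ ∑ r : X, ∑ b : B, σ r b * c r b) :
    ∀ r b, 0 < σstar r b → c r b ≤ 4 * (Fintype.card B : ℝ) :=
  min_cost_plan_small_cost_edges_general c hc μ ν σ' hσ' hσ'c σstar hstar hmin
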